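/- Let ν = m ω_1 − k α_1 be the weight of the basis vector v^m_k of the irreducible sl_2-module L_m. Then for the operator p(t;H,E,F) = Σ_{j≥0} F^j E^j (1/j!) Π_{s=0}^{j−1} 1/(t−H−s) one has p((λ + ν/2, α_1^∨) − 1; H,E,F) v^m_k = [ Π_{j=0}^{k−1} ((λ,α_1^∨) + m/2 − j) / ((λ,α_1^∨) − m/2 + j) ] v^m_k, as an identity of rational functions of (λ,α_1^∨). -/

import Mathlib

/- STATEMENT 6: action of p(t;H,E,F) on the basis v^m_k of the irreducible
(m+1)-dimensional sl₂-module L_m, realized concretely as Fin (m+1) → ℂ with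
H, E, F given by their matrices in the basis v^m_0, …, v^m_m. -/

open scoped BigOperators

noncomputable section

/-- Matrix of `H` on `L_m`: `H v_k = (m - 2k) v_k`. -/
def Hmat (m : ℕ) : Matrix (Fin (m+1)) (Fin (m+1)) ℂ :=
  Matrix.diagonal fun k => (m : ℂ) - 2 * (k : ℕ)

/-- Matrix of `E` on `L_m`: `E v_k = (m - k + 1) v_{k-1}`. -/
def Emat (m : ℕ) : Matrix (Fin (m+1)) (Fin (m+1)) ℂ :=
  Matrix.of fun j k => if (k : ℕ) = (j : ℕ) + 1 then (m : ℂ) - (j : ℕ) else 0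

/-- Matrix of `F` on `L_m`: `F v_k = (k+1) v_{k+1}`. -/
def Fmat (m : ℕ) : Matrix (Fin (m+1)) (Fin (m+1)) ℂ :=
  Matrix.of fun j k => if (j : ℕ) = (k : ℕ) + 1 then ((j : ℕ) : ℂ) else 0

/-- The operator `p(t; H, E, F) = Σ_k F^k E^k (1/k!) Π_{j=0}^{k-1} (t - H - j)⁻¹`.
On `L_m` the series truncates (terms with `k > m` vanish since `E^{m+1} = 0`). -/
def pMat (m : ℕ) (t : ℂ) (H E F : Matrix (Fin (m+1)) (Fin (m+1)) ℂ) :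
    Matrix (Fin (m+1)) (Fin (m+1)) ℂ :=
  ∑ k ∈ Finset.range (m + 2),
    ((Nat.factorial k : ℂ))⁻¹ •
      (F ^ k * E ^ k *
        ((List.range k).map fun j =>
          Ring.inverse (t • (1 : Matrix (Fin (m+1)) (Fin (m+1)) ℂ) - H - (j : ℂ) • 1)).prod)

/-- The basis vector `v^m_k` of `L_m`. -/
def vvec (m : ℕ) (k : Fin (m+1)) : Fin (m+1) → ℂ := Pi.single k 1

/-!
On `L_m` every `F^j E^j` is diagonal, acting on `v^m_k` by `k(k-1)⋯(k-j+1) · (m-k+1)⋯(m-k+j)`,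
and each resolvent factor `(t - H - s)⁻¹` acts on it by `(t - (m-2k) - s)⁻¹`; so `v^m_k` is an
eigenvector of `p(t)`. At `t = l + (m-2k)/2 - 1` and with `y = l - m/2`, the `j`-th term of the
eigenvalue is `C(k,j) (m-k+1)^{(j)} y^{(k-j)} / y^{(k)}` (rising factorials), and Chu–Vandermonde
sums these to `(l+m/2-k+1)^{(k)} / y^{(k)}`, which is the claimed product.
-/

open Finset Matrix Polynomial

theorem ascPochhammer_eval_eq_prod_range {R : Type*} [CommSemiring R] (n : ℕ) (r : R) :
    (ascPochhammer R n).eval r = ∏ j ∈ range n, (r + j) := by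
  induction n with
  | zero => simp
  | succ n ih => rw [ascPochhammer_succ_eval, ih, prod_range_succ]

theorem descPochhammer_smeval_eq_eval {R : Type*} [CommRing R] (n : ℕ) (r : R) :
    (descPochhammer ℤ n).smeval r = (descPochhammer R n).eval r := by
  rw [← aeval_eq_smeval, aeval_def, eval₂_eq_eval_map, descPochhammer_map]

/-- Chu–Vandermonde for rising factorials, obtained from the falling one through
`x^{(n)} = (-1)^n (-x)_n`. -/
theorem ascPochhammer_eval_add {R : Type*} [CommRing R] (a b : R) (n : ℕ) :
    (ascPochhammer R n).eval (a + b) = ∑ ij ∈ antidiagonal n,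
      n.choose ij.1 * ((ascPochhammer R ij.1).eval a * (ascPochhammer R ij.2).eval b) := by
  have h := Ring.descPochhammer_smeval_add n (Commute.all (-a) (-b))
  simp only [descPochhammer_smeval_eq_eval] at h
  rw [← neg_neg (a + b), ascPochhammer_eval_neg_eq_descPochhammer, neg_add, h, mul_sum]
  refine sum_congr rfl fun ij hij => ?_
  rw [← mem_antidiagonal.mp hij, ← neg_neg a, ← neg_neg b,
    ascPochhammer_eval_neg_eq_descPochhammer, ascPochhammer_eval_neg_eq_descPochhammer,
    neg_neg, neg_neg]
  ring

theorem ascPochhammer_eval_eq_mul_descPochhammer {R : Type*} [CommRing R] (y : R) {j k : ℕ}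
    (hjk : j ≤ k) :
    (ascPochhammer R k).eval y =
      (ascPochhammer R (k - j)).eval y * (descPochhammer R j).eval (y + k - 1) := by
  obtain ⟨i, rfl⟩ := Nat.exists_eq_add_of_le' hjk
  rw [descPochhammer_eval_eq_ascPochhammer, Nat.add_sub_cancel, ← ascPochhammer_mul R i j,
    eval_mul, eval_comp]
  simp only [eval_add, eval_X, eval_natCast, Nat.cast_add]
  ring_nf

theorem sum_descPochhammer_mul_ascPochhammer_div_eq {K : Type*} [Field K] [CharZero K]
    (a y : K) {k N : ℕ} (hkN : k < N) (hy : ∀ j < k, y + j ≠ 0) :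
    ∑ j ∈ range N, (j.factorial : K)⁻¹ * ((descPochhammer K j).eval (k : K) *
        (ascPochhammer K j).eval a * ((descPochhammer K j).eval (y + k - 1))⁻¹) =
      (ascPochhammer K k).eval (a + y) / (ascPochhammer K k).eval y := by
  have hy' : (ascPochhammer K k).eval y ≠ 0 := by
    rw [ascPochhammer_eval_eq_prod_range]
    exact prod_ne_zero_iff.mpr fun j hj => hy j (mem_range.mp hj)
  rw [ascPochhammer_eval_add, Nat.sum_antidiagonal_eq_sum_range_succ_mk, sum_div,
    ← sum_subset (range_subset_range.mpr hkN)]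
  · refine sum_congr rfl fun j hj => ?_
    have hjk : j ≤ k := Nat.lt_succ_iff.mp (mem_range.mp hj)
    rw [ascPochhammer_eval_eq_mul_descPochhammer y hjk] at hy' ⊢
    rw [descPochhammer_eval_eq_descFactorial, Nat.descFactorial_eq_factorial_mul_choose]
    have := Nat.factorial_ne_zero j
    have := left_ne_zero_of_mul hy'
    have := right_ne_zero_of_mul hy'
    field_simp
    push_cast
    ring
  · intro j _ hj
    rw [descPochhammer_eval_eq_descFactorial,
      Nat.descFactorial_eq_zero_iff_lt.mpr (by simpa using hj)]
    simp

/-- `v^m_n`, extended by zero to all `n : ℤ`, so that `E` and `F` act by their formulas with no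
boundary cases. -/
def basisVec (m : ℕ) (n : ℤ) : Fin (m+1) → ℂ := fun i => if (i : ℤ) = n then 1 else 0

lemma vvec_eq_basisVec (m : ℕ) (k : Fin (m+1)) : vvec m k = basisVec m k := by
  funext i
  simp [vvec, basisVec, Pi.single_apply, Fin.ext_iff]

lemma Hmat_mulVec_basisVec (m : ℕ) (n : ℤ) :
    Hmat m *ᵥ basisVec m n = ((m : ℂ) - 2 * n) • basisVec m n := by
  funext i
  by_cases h : (i : ℤ) = n
  · subst h
    simp [Hmat, basisVec, mulVec_diagonal]
  · simp [Hmat, basisVec, mulVec_diagonal, h]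

lemma Emat_mulVec_basisVec (m : ℕ) (n : ℤ) :
    Emat m *ᵥ basisVec m n = ((m : ℂ) - n + 1) • basisVec m (n - 1) := by
  funext i
  simp only [Emat, basisVec, mulVec, dotProduct, of_apply, mul_ite, mul_one, mul_zero,
    Pi.smul_apply, smul_eq_mul]
  rw [Fin.sum_univ_eq_sum_range
      fun k => if (k : ℤ) = n then if k = (i : ℕ) + 1 then (m : ℂ) - (i : ℕ) else 0 else 0,
    sum_eq_single ((i : ℕ) + 1)]
  · simp only [if_true]
    split_ifs with h₁ h₂ h₂
    · rw [← h₁]; push_cast; ring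
    · exact (h₂ (by omega)).elim
    · exact (h₁ (by omega)).elim
    · rfl
  · intro j _ hj
    simp [hj]
  · intro hi
    have : (i : ℕ) = m := by simp at hi; omega
    simp [this]

lemma Fmat_mulVec_basisVec (m : ℕ) (n : ℤ) :
    Fmat m *ᵥ basisVec m n = ((n : ℂ) + 1) • basisVec m (n + 1) := by
  funext i
  simp only [Fmat, basisVec, mulVec, dotProduct, of_apply, mul_ite, mul_one, mul_zero,
    Pi.smul_apply, smul_eq_mul]
  rw [Fin.sum_univ_eq_sum_range
      fun k => if (k : ℤ) = n then if (i : ℕ) = k + 1 then ((i : ℕ) : ℂ) else 0 else 0,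
    sum_eq_single ((i : ℕ) - 1)]
  · split_ifs with h₁ h₂ h₃ h₃ h₂
    all_goals first
      | rfl
      | (exfalso; omega)
      | exact_mod_cast h₃
      | (obtain rfl : n = -1 := by omega
         simp)
  · intro j _ hj
    simp only [ite_eq_right_iff]
    omega
  · simp

lemma Emat_pow_mulVec_basisVec (m j : ℕ) (n : ℤ) :
    Emat m ^ j *ᵥ basisVec m n =
      (ascPochhammer ℂ j).eval ((m : ℂ) - n + 1) • basisVec m (n - j) := by
  induction j with
  | zero => simp
  | succ j ih =>
    rw [pow_succ', ← mulVec_mulVec, ih, mulVec_smul, Emat_mulVec_basisVec, smul_smul,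
      ascPochhammer_succ_eval, Nat.cast_succ, sub_sub]
    push_cast
    ring_nf

lemma Fmat_pow_mulVec_basisVec (m j : ℕ) (n : ℤ) :
    Fmat m ^ j *ᵥ basisVec m n =
      (ascPochhammer ℂ j).eval ((n : ℂ) + 1) • basisVec m (n + j) := by
  induction j with
  | zero => simp
  | succ j ih =>
    rw [pow_succ', ← mulVec_mulVec, ih, mulVec_smul, Fmat_mulVec_basisVec, smul_smul,
      ascPochhammer_succ_eval, Nat.cast_succ, add_assoc]
    push_cast
    ring_nf

lemma Fmat_pow_mul_Emat_pow_mulVec_basisVec (m j : ℕ) (n : ℤ) :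
    (Fmat m ^ j * Emat m ^ j) *ᵥ basisVec m n =
      ((descPochhammer ℂ j).eval (n : ℂ) * (ascPochhammer ℂ j).eval ((m : ℂ) - n + 1)) •
        basisVec m n := by
  rw [← mulVec_mulVec, Emat_pow_mulVec_basisVec, mulVec_smul, Fmat_pow_mulVec_basisVec,
    smul_smul, descPochhammer_eval_eq_ascPochhammer, sub_add_cancel, mul_comm]
  push_cast
  rfl

lemma ringInverse_mulVec_of_mulVec_eq_smul {n K : Type*} [Fintype n] [DecidableEq n] [Field K]
    {A : Matrix n n K} (hA : IsUnit A) {v : n → K} {c : K} (hv : A *ᵥ v = c • v) :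
    Ring.inverse A *ᵥ v = c⁻¹ • v := by
  have h : v = c • (Ring.inverse A *ᵥ v) := by
    rw [← mulVec_smul, ← hv, mulVec_mulVec, Ring.inverse_mul_cancel _ hA, one_mulVec]
  rcases eq_or_ne c 0 with rfl | hc
  · rw [zero_smul] at h
    simp [h]
  · conv_rhs => rw [h, smul_smul, inv_mul_cancel₀ hc, one_smul]

lemma list_prod_map_ringInverse_mulVec {n K ι : Type*} [Fintype n] [DecidableEq n] [Field K]
    (L : List ι) {A : ι → Matrix n n K} {c : ι → K} {v : n → K}
    (hA : ∀ i ∈ L, IsUnit (A i)) (hv : ∀ i ∈ L, A i *ᵥ v = c i • v) :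
    (L.map fun i => Ring.inverse (A i)).prod *ᵥ v = (L.map fun i => (c i)⁻¹).prod • v := by
  induction L with
  | nil => simp
  | cons i L ih =>
    simp only [List.map_cons, List.prod_cons, List.forall_mem_cons] at hA hv ⊢
    rw [← mulVec_mulVec, ih hA.2 hv.2, mulVec_smul,
      ringInverse_mulVec_of_mulVec_eq_smul hA.1 hv.1, smul_smul, mul_comm]

lemma smul_one_sub_Hmat_sub_smul_one (m : ℕ) (t s : ℂ) :
    t • (1 : Matrix (Fin (m+1)) (Fin (m+1)) ℂ) - Hmat m - s • 1 =
      diagonal fun i : Fin (m+1) => t - ((m : ℂ) - 2 * (i : ℕ)) - s := by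
  ext i i'
  by_cases hi : i = i' <;> simp [Hmat, diagonal, one_apply, hi]

lemma resolvent_prod_mulVec_basisVec (m : ℕ) (t : ℂ) (n : ℤ) (j : ℕ)
    (h : ∀ s < j, ∀ i : Fin (m+1), t - ((m : ℂ) - 2 * (i : ℕ)) - s ≠ 0) :
    (((List.range j).map (Nat.cast : ℕ → ℂ)).map fun s =>
        Ring.inverse (t • (1 : Matrix (Fin (m+1)) (Fin (m+1)) ℂ) - Hmat m - s • 1)).prod *ᵥ
      basisVec m n =
      ((descPochhammer ℂ j).eval (t - ((m : ℂ) - 2 * n)))⁻¹ • basisVec m n := by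
  rw [list_prod_map_ringInverse_mulVec (A := fun s => t • 1 - Hmat m - s • 1)
      (c := fun s => t - ((m : ℂ) - 2 * n) - s), List.map_map,
    descPochhammer_eval_eq_prod_range, ← prod_inv_distrib]
  · rfl
  · simp only [List.mem_map, List.mem_range]
    rintro _ ⟨s, hs, rfl⟩
    simp only [smul_one_sub_Hmat_sub_smul_one, isUnit_diagonal, Pi.isUnit_iff, isUnit_iff_ne_zero]
    exact h s hs
  · intro s _
    simp only [sub_mulVec, smul_mulVec, one_mulVec, Hmat_mulVec_basisVec, sub_smul]

lemma pMat_mulVec_basisVec (m : ℕ) (t : ℂ) (n : ℤ)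
    (h : ∀ i : Fin (m+1), ∀ s ∈ range (m + 2),
      t - ((m : ℂ) - 2 * (i : ℕ)) - (s : ℕ) ≠ 0) :
    pMat m t (Hmat m) (Emat m) (Fmat m) *ᵥ basisVec m n =
      (∑ j ∈ range (m + 2), (j.factorial : ℂ)⁻¹ * ((descPochhammer ℂ j).eval (n : ℂ) *
        (ascPochhammer ℂ j).eval ((m : ℂ) - n + 1) *
        ((descPochhammer ℂ j).eval (t - ((m : ℂ) - 2 * n)))⁻¹)) • basisVec m n := by
  rw [pMat, sum_mulVec, sum_smul]
  refine sum_congr rfl fun j hj => ?_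
  -- `pMat` casts `List.range j` to `List ℂ` through the list monad.
  have hlist :
      (do let a ← List.range j; pure (a : ℂ) : List ℂ) = (List.range j).map Nat.cast :=
    List.flatMap_pure_eq_map _ _
  have hres : ∀ s < j, ∀ i : Fin (m+1), t - ((m : ℂ) - 2 * (i : ℕ)) - s ≠ 0 :=
    fun s hs i => h i s (mem_range.mpr (hs.trans (mem_range.mp hj)))
  rw [hlist, smul_mulVec, ← mulVec_mulVec, resolvent_prod_mulVec_basisVec m t n j hres,
    mulVec_smul, Fmat_pow_mul_Emat_pow_mulVec_basisVec, smul_smul, smul_smul]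
  congr 1
  ring

/-- with `ν = m ω₁ - k α₁` the weight of `v^m_k` (so `(ν,α₁^∨) = m - 2k`),
`p((λ+ν/2,α₁^∨)-1; H,E,F) v^m_k = [ Π_{j=0}^{k-1} ((λ,α₁^∨)+m/2-j)/((λ,α₁^∨)-m/2+j) ] v^m_k`,
as rational functions of `l = (λ,α₁^∨)`, i.e. for every `l` avoiding the poles.
Here `(λ+ν/2,α₁^∨)-1 = l + (m-2k)/2 - 1`. -/
theorem stmt7 (m : ℕ) (k : Fin (m+1)) (l : ℂ)
    (hgen : ∀ s : Fin (m+1), ∀ j ∈ Finset.range (m + 2),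
      (l + ((m : ℂ) - 2 * (k : ℕ)) / 2 - 1) - ((m : ℂ) - 2 * (s : ℕ)) - (j : ℕ) ≠ 0)
    (hden : ∀ j ∈ Finset.range (k : ℕ), l - (m : ℂ) / 2 + (j : ℕ) ≠ 0) :
    Matrix.mulVec
        (pMat m (l + ((m : ℂ) - 2 * (k : ℕ)) / 2 - 1) (Hmat m) (Emat m) (Fmat m)) (vvec m k) =
      (∏ j ∈ Finset.range (k : ℕ),
        (l + (m : ℂ) / 2 - (j : ℕ)) / (l - (m : ℂ) / 2 + (j : ℕ))) • vvec m k := by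
  rw [vvec_eq_basisVec, pMat_mulVec_basisVec m _ _ hgen, Int.cast_natCast,
    show l + ((m : ℂ) - 2 * (k : ℕ)) / 2 - 1 - ((m : ℂ) - 2 * (k : ℕ)) =
      l - m / 2 + (k : ℕ) - 1 by ring,
    sum_descPochhammer_mul_ascPochhammer_div_eq _ _ (by omega)
      fun j hj => hden j (mem_range.mpr hj)]
  congr 1
  rw [show (m : ℂ) - (k : ℕ) + 1 + (l - m / 2) = l + m / 2 - (k : ℕ) + 1 by ring,
    ← descPochhammer_eval_eq_ascPochhammer, descPochhammer_eval_eq_prod_range,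
    ascPochhammer_eval_eq_prod_range, ← prod_div_distrib]

end
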